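/- Let (G = (V, E), S, k) be an instance of Multicut with Vertex Splitting, where S is a set of terminal pairs with S ∩ E = ∅ and k ≥ 0. Let H = (V, B, R) be the incomplete correlation graph with blue edge set B = E and red edge set R = S. Then (G, S, k) admits a sequence of at most k exclusive vertex splits separating every surviving terminal pair if and only if H can be clustered by a sequence of at most k permissive vertex splits. -/

import Mathlib

structure ICG where
  verts : Finset ℕ
  blue : Finset (Sym2 ℕ)
  red : Finset (Sym2 ℕ)
  blue_mem : ∀ e ∈ blue, ∀ x ∈ e, x ∈ verts
  red_mem : ∀ e ∈ red, ∀ x ∈ e, x ∈ verts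
  blue_nd : ∀ e ∈ blue, ¬ e.IsDiag
  red_nd : ∀ e ∈ red, ¬ e.IsDiag
  disj : Disjoint blue red

def PermSplit (G G' : ICG) : Prop :=
  ∃ v v1 v2 : ℕ, v ∈ G.verts ∧ v1 ∉ G.verts ∧ v2 ∉ G.verts ∧ v1 ≠ v2 ∧
    G'.verts = insert v1 (insert v2 (G.verts.erase v)) ∧
    (∀ u w : ℕ, u ≠ v → w ≠ v → u ≠ v1 → u ≠ v2 → w ≠ v1 → w ≠ v2 →
      ((s(u,w) ∈ G.blue ↔ s(u,w) ∈ G'.blue) ∧ (s(u,w) ∈ G.red ↔ s(u,w) ∈ G'.red))) ∧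
    (∀ u : ℕ, s(u,v) ∈ G.blue → s(u,v1) ∈ G'.blue ∨ s(u,v2) ∈ G'.blue) ∧
    (∀ u : ℕ, s(u,v) ∈ G.red → s(u,v1) ∈ G'.red ∨ s(u,v2) ∈ G'.red)

def HasErrCycle (G : ICG) : Prop :=
  ∃ (l : List ℕ) (u v : ℕ), l.Nodup ∧ l.Chain' (fun a b => s(a,b) ∈ G.blue) ∧
    l.head? = some u ∧ l.getLast? = some v ∧ s(u,v) ∈ G.red

def Splits (n : ℕ) (G G' : ICG) : Prop :=
  ∃ f : ℕ → ICG, f 0 = G ∧ f n = G' ∧ ∀ i < n, PermSplit (f i) (f (i+1))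

structure SG where
  verts : Finset ℕ
  edges : Finset (Sym2 ℕ)
  edges_mem : ∀ e ∈ edges, ∀ x ∈ e, x ∈ verts
  edges_nd : ∀ e ∈ edges, ¬ e.IsDiag

/-- One exclusive vertex split, on a state consisting of the current graph together
with the set of vertex names used so far (to guarantee freshness of new vertices). -/
def ExclStep (p q : SG × Finset ℕ) : Prop :=
  ∃ v v1 v2 : ℕ, v ∈ p.1.verts ∧ v1 ∉ p.2 ∧ v2 ∉ p.2 ∧ v1 ∉ p.1.verts ∧ v2 ∉ p.1.verts ∧
    v1 ≠ v2 ∧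
    q.2 = insert v1 (insert v2 p.2) ∧
    q.1.verts = insert v1 (insert v2 (p.1.verts.erase v)) ∧
    (∀ u w : ℕ, u ≠ v → w ≠ v → u ≠ v1 → u ≠ v2 → w ≠ v1 → w ≠ v2 →
      (s(u,w) ∈ p.1.edges ↔ s(u,w) ∈ q.1.edges)) ∧
    (∀ u : ℕ, s(u,v) ∈ p.1.edges ↔ (s(u,v1) ∈ q.1.edges ∨ s(u,v2) ∈ q.1.edges)) ∧
    (∀ u : ℕ, ¬ (s(u,v1) ∈ q.1.edges ∧ s(u,v2) ∈ q.1.edges))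

def Reach (H : SG) (x y : ℕ) : Prop :=
  Relation.ReflTransGen (fun a b => s(a,b) ∈ H.edges) x y

/-- A solution of the Multicut with Vertex Splitting instance `(H, S, k)`:
a sequence of at most `k` exclusive vertex splits after which every terminal pair
both of whose endpoints are unsplit (i.e., still present) lies in different
connected components. -/
def MCSolution (H : SG) (S : Finset (Sym2 ℕ)) (k : ℕ) : Prop :=
  ∃ (n : ℕ) (f : ℕ → SG × Finset ℕ), n ≤ k ∧ f 0 = (H, H.verts) ∧
    (∀ i < n, ExclStep (f i) (f (i+1))) ∧
    ∀ e ∈ S, ∀ x y : ℕ, e = s(x,y) →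
      x ∈ (f n).1.verts → y ∈ (f n).1.verts → ¬ Reach (f n).1 x y

/-!
Clustering ⇒ multicut: replay the permissive splits by exclusive ones. Keep a bijection `ψ` from
the exclusively split graph onto the current correlation graph that sends edges to blue edges and
fixes the original vertices. When `v` is split into `v₁`, `v₂`, split `ψ⁻¹ v` exclusively, sending
a neighbour `u` to the first copy iff `ψ u` is blue-adjacent to `v₁`. At the end, a path between
two surviving terminals maps to a blue path, which closes an erroneous cycle with their red edge.

Multicut ⇒ clustering: any colouring of the final vertices, projected back along the split
history (each vertex goes to its ancestor), is reached from its projection by permissive splits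
that mirror the exclusive ones. Colour a pair of final vertices blue if it projects to an edge and
is linked (connected in the final graph, both ends being representatives of their root classes),
and red if it projects to a terminal pair and is not linked; representatives are chosen only in
root classes that lie in one component. Linkedness is transitive, so there is no erroneous cycle.
Every edge has a descendant edge, which stays linked after moving its ends to the
representatives. If all descendant pairs of a terminal pair were linked, both terminals would
have a single descendant, so would be unsplit and, by the multicut, separated.
-/

open Relation
theorem hasErrCycle_iff (G : ICG) : HasErrCycle G ↔
    ∃ x y, s(x, y) ∈ G.red ∧ ReflTransGen (fun a b => s(a, b) ∈ G.blue) x y := by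
  constructor
  · rintro ⟨l, u, v, -, hl, hu, hv, hred⟩
    have hne : l ≠ [] := by rintro rfl; simp at hu
    refine ⟨u, v, hred, ?_⟩
    rw [List.head?_eq_some_head hne, Option.some_inj] at hu
    rw [List.getLast?_eq_some_getLast hne, Option.some_inj] at hv
    exact hu ▸ hv ▸ List.relationReflTransGen_of_exists_isChain l hl hne
  · rintro ⟨x, y, hred, h⟩
    let B := SimpleGraph.fromRel (fun a b => s(a, b) ∈ G.blue)
    have hB : ReflTransGen B.Adj x y := by
      refine ReflTransGen.mono (fun a b hab => ⟨fun hab' => G.blue_nd _ hab ?_, .inl hab⟩) _ _ h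
      simpa [Sym2.mk_isDiag_iff] using hab'
    obtain ⟨w⟩ := (SimpleGraph.reachable_iff_reflTransGen x y).mpr hB
    let p := w.toPath
    refine ⟨p.1.support, x, y, p.2.support_nodup, ?_, ?_, ?_, hred⟩
    · refine p.1.isChain_adj_support.imp fun a b hab => ?_
      rcases hab.2 with h | h
      · exact h
      · exact Sym2.eq_swap ▸ h
    · simp [List.head?_eq_some_head (SimpleGraph.Walk.support_ne_nil _)]
    · simp [List.getLast?_eq_some_getLast (SimpleGraph.Walk.support_ne_nil _)]

/-! ### From a clustering to a multicut -/

theorem exists_chain_of_forall_step {α β : Type*} {r : α → α → Prop} {s : β → β → Prop}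
    {I : α → β → Prop} (hstep : ∀ a b b', I a b → s b b' → ∃ a', r a a' ∧ I a' b')
    {g : ℕ → β} {n : ℕ} (hg : ∀ i < n, s (g i) (g (i + 1))) {a₀ : α} (h₀ : I a₀ (g 0)) :
    ∃ f : ℕ → α, f 0 = a₀ ∧ (∀ i < n, r (f i) (f (i + 1))) ∧ I (f n) (g n) := by
  induction n with
  | zero => exact ⟨fun _ => a₀, rfl, by simp, h₀⟩
  | succ n ih =>
    obtain ⟨f, hf₀, hf, hfn⟩ := ih fun i hi => hg i (by omega)
    obtain ⟨a', ha', hIa'⟩ := hstep _ _ _ hfn (hg n n.lt_succ_self)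
    refine ⟨fun i => if i ≤ n then f i else a', by simpa using hf₀, fun i hi => ?_, by simpa⟩
    rcases Nat.lt_succ_iff_lt_or_eq.mp hi with hi | rfl
    · simpa [hi.le, Nat.succ_le_of_lt hi] using hf i hi
    · simpa using ha'

namespace SG

variable (P : SG) (v a₁ a₂ : ℕ) (toFirst : ℕ → Prop) [DecidablePred toFirst]

def splitVertex (h₁ : a₁ ∉ P.verts) (h₂ : a₂ ∉ P.verts) : SG where
  verts := insert a₁ (insert a₂ (P.verts.erase v))
  edges := P.edges.filter (v ∉ ·) ∪ (P.verts.filter (s(·, v) ∈ P.edges)).image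
    (fun u => s(u, if toFirst u then a₁ else a₂))
  edges_mem := by
    simp only [Finset.mem_union, Finset.mem_filter, Finset.mem_image]
    rintro e (⟨he, hve⟩ | ⟨u, ⟨hu, huv⟩, rfl⟩) x hx
    · exact Finset.mem_insert_of_mem <| Finset.mem_insert_of_mem <|
        Finset.mem_erase.mpr ⟨fun h => hve (h ▸ hx), P.edges_mem e he x hx⟩
    · have hne : u ≠ v := fun h => P.edges_nd _ huv (h ▸ Sym2.mk_isDiag_iff.mpr rfl)
      rcases Sym2.mem_iff.mp hx with rfl | rfl
      · simp [hne, hu]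
      · split_ifs <;> simp
  edges_nd := by
    simp only [Finset.mem_union, Finset.mem_filter, Finset.mem_image]
    rintro e (⟨he, -⟩ | ⟨u, ⟨hu, -⟩, rfl⟩)
    · exact P.edges_nd e he
    · rw [Sym2.mk_isDiag_iff]
      split_ifs
      · exact fun h => h₁ (h ▸ hu)
      · exact fun h => h₂ (h ▸ hu)

variable {P v a₁ a₂ toFirst} {h₁ : a₁ ∉ P.verts} {h₂ : a₂ ∉ P.verts}

theorem mem_splitVertex_edges {e : Sym2 ℕ} :
    e ∈ (P.splitVertex v a₁ a₂ toFirst h₁ h₂).edges ↔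
      (e ∈ P.edges ∧ v ∉ e) ∨ ∃ u, s(u, v) ∈ P.edges ∧ s(u, if toFirst u then a₁ else a₂) = e := by
  simp only [splitVertex, Finset.mem_union, Finset.mem_filter, Finset.mem_image]
  refine or_congr Iff.rfl ⟨fun ⟨u, ⟨_, h⟩, he⟩ => ⟨u, h, he⟩, fun ⟨u, h, he⟩ => ⟨u, ⟨?_, h⟩, he⟩⟩
  exact P.edges_mem _ h u (Sym2.mem_mk_left u v)

theorem splitVertex_adj_of_ne {u w : ℕ} (hu : u ≠ v) (hw : w ≠ v) (hu₁ : u ≠ a₁) (hu₂ : u ≠ a₂)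
    (hw₁ : w ≠ a₁) (hw₂ : w ≠ a₂) :
    s(u, w) ∈ (P.splitVertex v a₁ a₂ toFirst h₁ h₂).edges ↔ s(u, w) ∈ P.edges := by
  rw [mem_splitVertex_edges]
  refine ⟨?_, fun h => .inl ⟨h, by simp [hu.symm, hw.symm]⟩⟩
  rintro (⟨h, -⟩ | ⟨x, -, hx⟩)
  · exact h
  · split_ifs at hx <;> rcases Sym2.eq_iff.mp hx with ⟨-, h⟩ | ⟨-, h⟩ <;> simp_all

theorem splitVertex_adj_first (h₁₂ : a₁ ≠ a₂) {u : ℕ} :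
    s(u, a₁) ∈ (P.splitVertex v a₁ a₂ toFirst h₁ h₂).edges ↔ s(u, v) ∈ P.edges ∧ toFirst u := by
  rw [mem_splitVertex_edges]
  refine ⟨?_, fun ⟨h, hu⟩ => .inr ⟨u, h, by simp [hu]⟩⟩
  rintro (⟨h, -⟩ | ⟨x, hx, he⟩)
  · exact absurd (P.edges_mem _ h _ (Sym2.mem_mk_right u a₁)) h₁
  · have hxP := P.edges_mem _ hx x (Sym2.mem_mk_left x v)
    split_ifs at he with hT <;> rcases Sym2.eq_iff.mp he with ⟨rfl, h⟩ | ⟨rfl, -⟩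
    · exact ⟨hx, hT⟩
    · exact absurd hxP h₁
    · exact absurd h h₁₂.symm
    · exact absurd hxP h₁

theorem splitVertex_adj_second (h₁₂ : a₁ ≠ a₂) {u : ℕ} :
    s(u, a₂) ∈ (P.splitVertex v a₁ a₂ toFirst h₁ h₂).edges ↔ s(u, v) ∈ P.edges ∧ ¬ toFirst u := by
  rw [mem_splitVertex_edges]
  refine ⟨?_, fun ⟨h, hu⟩ => .inr ⟨u, h, by simp [hu]⟩⟩
  rintro (⟨h, -⟩ | ⟨x, hx, he⟩)
  · exact absurd (P.edges_mem _ h _ (Sym2.mem_mk_right u a₂)) h₂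
  · have hxP := P.edges_mem _ hx x (Sym2.mem_mk_left x v)
    split_ifs at he with hT <;> rcases Sym2.eq_iff.mp he with ⟨rfl, h⟩ | ⟨rfl, -⟩
    · exact absurd h h₁₂
    · exact absurd hxP h₂
    · exact ⟨hx, hT⟩
    · exact absurd hxP h₂

theorem exclStep_splitVertex {U : Finset ℕ} (hv : v ∈ P.verts) (hU₁ : a₁ ∉ U) (hU₂ : a₂ ∉ U)
    (h₁₂ : a₁ ≠ a₂) :
    ExclStep (P, U) (P.splitVertex v a₁ a₂ toFirst h₁ h₂, insert a₁ (insert a₂ U)) := by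
  refine ⟨v, a₁, a₂, hv, hU₁, hU₂, h₁, h₂, h₁₂, rfl, rfl, fun u w hu hw hu₁ hu₂ hw₁ hw₂ =>
    (splitVertex_adj_of_ne (h₁ := h₁) (h₂ := h₂) hu hw hu₁ hu₂ hw₁ hw₂).symm, fun u => ?_,
    fun u => ?_⟩
  · rw [splitVertex_adj_first h₁₂, splitVertex_adj_second h₁₂]
    tauto
  · rw [splitVertex_adj_first h₁₂, splitVertex_adj_second h₁₂]
    tauto

end SG

theorem bijOn_update_split {ψ : ℕ → ℕ} {s t : Finset ℕ} (h : Set.BijOn ψ s t)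
    {v' a₁ a₂ v₁ v₂ : ℕ} (hv' : v' ∈ s) (ha₁ : a₁ ∉ s) (ha₂ : a₂ ∉ s) (h₁₂ : a₁ ≠ a₂)
    (hv₁ : v₁ ∉ t) (hv₂ : v₂ ∉ t) (hv₁₂ : v₁ ≠ v₂) :
    Set.BijOn (Function.update (Function.update ψ a₁ v₁) a₂ v₂)
      ↑(insert a₁ (insert a₂ (s.erase v'))) ↑(insert v₁ (insert v₂ (t.erase (ψ v')))) := by
  set ψ' := Function.update (Function.update ψ a₁ v₁) a₂ v₂
  have hψ'₁ : ψ' a₁ = v₁ := by simp [ψ', h₁₂]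
  have hψ'₂ : ψ' a₂ = v₂ := by simp [ψ']
  have h₀ : Set.BijOn ψ' (↑s \ {v'}) (↑t \ {ψ v'}) := by
    refine (h.sdiff_singleton hv').congr fun x hx => ?_
    have hx : x ∈ s := hx.1
    simp [ψ', show x ≠ a₁ by rintro rfl; exact ha₁ hx, show x ≠ a₂ by rintro rfl; exact ha₂ hx]
  have h₂ := h₀.insert (a := a₂) (by simp [hψ'₂, hv₂])
  have h₁ := h₂.insert (a := a₁) (by simp [hψ'₁, hψ'₂, hv₁₂, hv₁])
  rw [hψ'₁, hψ'₂] at h₁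
  simpa [Finset.coe_insert, Finset.coe_erase] using h₁

structure IsSimulation (G₀ : SG) (red₀ : Finset (Sym2 ℕ)) (p : SG × Finset ℕ) (ψ : ℕ → ℕ)
    (g : ICG) : Prop where
  bijOn : Set.BijOn ψ p.1.verts g.verts
  map_mem_blue : ∀ e ∈ p.1.edges, e.map ψ ∈ g.blue
  verts_subset : p.1.verts ⊆ p.2
  orig_subset : G₀.verts ⊆ p.2
  apply_orig : ∀ x ∈ G₀.verts, x ∈ p.1.verts → ψ x = x
  red_orig : ∀ x ∈ G₀.verts, ∀ y ∈ G₀.verts, x ∈ p.1.verts → y ∈ p.1.verts →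
    s(x, y) ∈ red₀ → s(x, y) ∈ g.red

namespace IsSimulation

variable {G₀ : SG} {red₀ : Finset (Sym2 ℕ)} {p : SG × Finset ℕ} {ψ : ℕ → ℕ} {g : ICG}

theorem init (H : ICG) (hv : H.verts = G₀.verts) (hb : H.blue = G₀.edges) :
    IsSimulation G₀ H.red (G₀, G₀.verts) id H where
  bijOn := hv ▸ Set.bijOn_id _
  map_mem_blue e he := by simpa [hb] using he
  verts_subset := subset_rfl
  orig_subset := subset_rfl
  apply_orig _ _ _ := rfl
  red_orig _ _ _ _ _ _ h := h

theorem map_mem_blue_splitVertex (hsim : IsSimulation G₀ red₀ p ψ g) {g' : ICG} {v v₁ v₂ : ℕ}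
    (hv₁ : v₁ ∉ g.verts) (hv₂ : v₂ ∉ g.verts)
    (hpres : ∀ u w : ℕ, u ≠ v → w ≠ v → u ≠ v₁ → u ≠ v₂ → w ≠ v₁ → w ≠ v₂ →
      ((s(u, w) ∈ g.blue ↔ s(u, w) ∈ g'.blue) ∧ (s(u, w) ∈ g.red ↔ s(u, w) ∈ g'.red)))
    (hblue : ∀ u : ℕ, s(u, v) ∈ g.blue → s(u, v₁) ∈ g'.blue ∨ s(u, v₂) ∈ g'.blue)
    {v' a₁ a₂ : ℕ} (hv' : v' ∈ p.1.verts) (hψv' : ψ v' = v) (hP₁ : a₁ ∉ p.1.verts)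
    (hP₂ : a₂ ∉ p.1.verts) (h₁₂ : a₁ ≠ a₂) :
    ∀ e ∈ (p.1.splitVertex v' a₁ a₂ (fun u => s(ψ u, v₁) ∈ g'.blue) hP₁ hP₂).edges,
      e.map (Function.update (Function.update ψ a₁ v₁) a₂ v₂) ∈ g'.blue := by
  set ψ' := Function.update (Function.update ψ a₁ v₁) a₂ v₂
  have hψ' : ∀ x ∈ p.1.verts, ψ' x = ψ x := fun x hx => by
    simp [ψ', show x ≠ a₁ by rintro rfl; exact hP₁ hx, show x ≠ a₂ by rintro rfl; exact hP₂ hx]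
  intro e he
  rcases SG.mem_splitVertex_edges.mp he with ⟨he, hv'e⟩ | ⟨u, hu, rfl⟩
  · induction e using Sym2.ind with | _ a b => ?_
    have hfar : ∀ x ∈ p.1.verts, x ∈ s(a, b) → ψ x ≠ v ∧ ψ x ≠ v₁ ∧ ψ x ≠ v₂ := fun x hx hxe =>
      ⟨hψv' ▸ fun h => hv'e (hsim.bijOn.injOn hx hv' h ▸ hxe),
        fun h => hv₁ (h ▸ hsim.bijOn.mapsTo hx), fun h => hv₂ (h ▸ hsim.bijOn.mapsTo hx)⟩
    have ha := p.1.edges_mem _ he a (Sym2.mem_mk_left a b)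
    have hb := p.1.edges_mem _ he b (Sym2.mem_mk_right a b)
    obtain ⟨ha₀, ha₁, ha₂⟩ := hfar a ha (Sym2.mem_mk_left a b)
    obtain ⟨hb₀, hb₁, hb₂⟩ := hfar b hb (Sym2.mem_mk_right a b)
    rw [Sym2.map_mk, hψ' a ha, hψ' b hb]
    exact ((hpres _ _ ha₀ hb₀ ha₁ ha₂ hb₁ hb₂).1).mp (hsim.map_mem_blue _ he)
  · have hu' := p.1.edges_mem _ hu u (Sym2.mem_mk_left u v')
    rw [Sym2.map_mk, hψ' u hu']
    split_ifs with hT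
    · simpa [ψ', h₁₂] using hT
    · have := hsim.map_mem_blue _ hu
      rw [Sym2.map_mk, hψv'] at this
      simpa [ψ'] using (hblue _ this).resolve_left hT

theorem splitVertex (hsim : IsSimulation G₀ red₀ p ψ g) {g' : ICG}
    {v v₁ v₂ : ℕ} (hv₁ : v₁ ∉ g.verts) (hv₂ : v₂ ∉ g.verts) (hv₁₂ : v₁ ≠ v₂)
    (hverts : g'.verts = insert v₁ (insert v₂ (g.verts.erase v)))
    (hpres : ∀ u w : ℕ, u ≠ v → w ≠ v → u ≠ v₁ → u ≠ v₂ → w ≠ v₁ → w ≠ v₂ →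
      ((s(u, w) ∈ g.blue ↔ s(u, w) ∈ g'.blue) ∧ (s(u, w) ∈ g.red ↔ s(u, w) ∈ g'.red)))
    (hblue : ∀ u : ℕ, s(u, v) ∈ g.blue → s(u, v₁) ∈ g'.blue ∨ s(u, v₂) ∈ g'.blue)
    {v' a₁ a₂ : ℕ} (hv' : v' ∈ p.1.verts) (hψv' : ψ v' = v) (ha₁ : a₁ ∉ p.2) (ha₂ : a₂ ∉ p.2)
    (h₁₂ : a₁ ≠ a₂) :
    IsSimulation G₀ red₀
      (p.1.splitVertex v' a₁ a₂ (fun u => s(ψ u, v₁) ∈ g'.blue)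
        (fun h => ha₁ (hsim.verts_subset h)) (fun h => ha₂ (hsim.verts_subset h)),
        insert a₁ (insert a₂ p.2))
      (Function.update (Function.update ψ a₁ v₁) a₂ v₂) g' := by
  have hP₁ : a₁ ∉ p.1.verts := fun h => ha₁ (hsim.verts_subset h)
  have hP₂ : a₂ ∉ p.1.verts := fun h => ha₂ (hsim.verts_subset h)
  have horig : ∀ x ∈ G₀.verts, x ∈ insert a₁ (insert a₂ (p.1.verts.erase v')) →
      x ≠ v' ∧ x ∈ p.1.verts ∧ Function.update (Function.update ψ a₁ v₁) a₂ v₂ x = x := by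
    intro x hx hx'
    have h₁ : x ≠ a₁ := by rintro rfl; exact ha₁ (hsim.orig_subset hx)
    have h₂ : x ≠ a₂ := by rintro rfl; exact ha₂ (hsim.orig_subset hx)
    simp only [Finset.mem_insert, Finset.mem_erase, h₁, h₂, false_or] at hx'
    simpa [h₁, h₂, hx'] using hsim.apply_orig x hx hx'.2
  refine ⟨?_, hsim.map_mem_blue_splitVertex hv₁ hv₂ hpres hblue hv' hψv' hP₁ hP₂ h₁₂, ?_, ?_,
    fun x hx hx' => (horig x hx hx').2.2, fun x hx y hy hx' hy' hxy => ?_⟩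
  · rw [hverts, ← hψv']
    exact bijOn_update_split hsim.bijOn hv' hP₁ hP₂ h₁₂ hv₁ hv₂ hv₁₂
  · intro x hx
    simp only [SG.splitVertex, Finset.mem_insert, Finset.mem_erase] at hx ⊢
    rcases hx with rfl | rfl | ⟨-, hx⟩
    · exact .inl rfl
    · exact .inr (.inl rfl)
    · exact .inr (.inr (hsim.verts_subset hx))
  · exact hsim.orig_subset.trans ((Finset.subset_insert _ _).trans (Finset.subset_insert _ _))
  ·
    obtain ⟨hxv', hxP, -⟩ := horig x hx hx'
    obtain ⟨hyv', hyP, -⟩ := horig y hy hy'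
    have hfar : ∀ z ∈ p.1.verts, z ≠ v' → ψ z = z → z ≠ v ∧ z ≠ v₁ ∧ z ≠ v₂ := by
      intro z hz hzv' hψz
      refine ⟨fun h => hzv' (hsim.bijOn.injOn hz hv' (by rw [hψz, hψv', h])), ?_, ?_⟩
      · exact fun h => hv₁ (h ▸ hψz ▸ hsim.bijOn.mapsTo hz)
      · exact fun h => hv₂ (h ▸ hψz ▸ hsim.bijOn.mapsTo hz)
    obtain ⟨hx₀, hx₁, hx₂⟩ := hfar x hxP hxv' (hsim.apply_orig x hx hxP)
    obtain ⟨hy₀, hy₁, hy₂⟩ := hfar y hyP hyv' (hsim.apply_orig y hy hyP)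
    exact ((hpres _ _ hx₀ hy₀ hx₁ hx₂ hy₁ hy₂).2).mp (hsim.red_orig x hx y hy hxP hyP hxy)

theorem exists_step (hsim : IsSimulation G₀ red₀ p ψ g) {g' : ICG} (h : PermSplit g g') :
    ∃ p' ψ', ExclStep p p' ∧ IsSimulation G₀ red₀ p' ψ' g' := by
  obtain ⟨v, v₁, v₂, hv, hv₁, hv₂, hv₁₂, hverts, hpres, hblue, -⟩ := h
  obtain ⟨v', hv', hψv'⟩ := hsim.bijOn.surjOn hv
  obtain ⟨a₁, ha₁⟩ := Infinite.exists_notMem_finset p.2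
  obtain ⟨a₂, ha₂⟩ := Infinite.exists_notMem_finset (insert a₁ p.2)
  rw [Finset.mem_insert, not_or] at ha₂
  exact ⟨_, _, SG.exclStep_splitVertex hv' ha₁ ha₂.2 (Ne.symm ha₂.1),
    hsim.splitVertex hv₁ hv₂ hv₁₂ hverts hpres hblue hv' hψv' ha₁ ha₂.2 (Ne.symm ha₂.1)⟩

theorem not_reach (hsim : IsSimulation G₀ red₀ p ψ g) (hg : ¬ HasErrCycle g) {x y : ℕ}
    (hx : x ∈ G₀.verts) (hy : y ∈ G₀.verts) (hxp : x ∈ p.1.verts) (hyp : y ∈ p.1.verts)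
    (hxy : s(x, y) ∈ red₀) : ¬ Reach p.1 x y := by
  intro hreach
  refine hg ((hasErrCycle_iff g).mpr ⟨x, y, hsim.red_orig x hx y hy hxp hyp hxy, ?_⟩)
  have : ReflTransGen _ (ψ x) (ψ y) := ReflTransGen.lift (p := fun a b => s(a, b) ∈ g.blue) ψ
    (fun a b hab => by simpa using hsim.map_mem_blue _ hab) _ _ hreach
  rwa [hsim.apply_orig x hx hxp, hsim.apply_orig y hy hyp] at this

end IsSimulation

theorem mcSolution_of_splits (G : SG) (S : Finset (Sym2 ℕ)) (k : ℕ) (H : ICG)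
    (hv : H.verts = G.verts) (hb : H.blue = G.edges) (hr : H.red = S)
    (h : ∃ n ≤ k, ∃ G', Splits n H G' ∧ ¬ HasErrCycle G') : MCSolution G S k := by
  obtain ⟨n, hnk, G', ⟨g, hg₀, rfl, hg⟩, herr⟩ := h
  obtain ⟨f, hf₀, hf, hfn⟩ := exists_chain_of_forall_step
    (r := fun p q => ExclStep p.1 q.1) (s := PermSplit)
    (I := fun p g => IsSimulation G H.red p.1 p.2 g)
    (fun _ _ _ hsim hsplit => by
      obtain ⟨p', ψ', h⟩ := hsim.exists_step hsplit
      exact ⟨(p', ψ'), h⟩) hg (a₀ := ((G, G.verts), id))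
    (by rw [hg₀]; exact IsSimulation.init H hv hb)
  refine ⟨n, fun i => (f i).1, hnk, by simp [hf₀], hf, ?_⟩
  rintro e he x y rfl hx hy
  have hxy : s(x, y) ∈ H.red := hr ▸ he
  exact hfn.not_reach herr (hv ▸ H.red_mem _ hxy x (Sym2.mem_mk_left x y))
    (hv ▸ H.red_mem _ hxy y (Sym2.mem_mk_right x y)) hx hy hxy

/-! ### From a multicut to a clustering -/

/-- Undoes the split of `a` into `b` and `c`. -/
def mergeMap (a b c x : ℕ) : ℕ := if x = b ∨ x = c then a else x

section mergeMap

variable {a b c : ℕ}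

theorem mergeMap_of_ne {x : ℕ} (hb : x ≠ b) (hc : x ≠ c) : mergeMap a b c x = x := by
  simp [mergeMap, hb, hc]

theorem mergeMap_eq_self_of_ne {x : ℕ} (h : mergeMap a b c x ≠ a) : mergeMap a b c x = x := by
  unfold mergeMap at h ⊢
  split_ifs at h ⊢ <;> trivial

theorem image_mergeMap {W : Finset ℕ} (ha : a ∈ W) (hb : b ∉ W) (hc : c ∉ W) :
    (insert b (insert c (W.erase a))).image (mergeMap a b c) = W := by
  ext x
  simp only [Finset.mem_image, Finset.mem_insert, Finset.mem_erase]
  constructor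
  · rintro ⟨y, hy, rfl⟩
    rcases hy with rfl | rfl | ⟨-, hy⟩
    · simpa [mergeMap] using ha
    · simpa [mergeMap] using ha
    · rwa [mergeMap_of_ne (by rintro rfl; exact hb hy) (by rintro rfl; exact hc hy)]
  · intro hx
    by_cases hxa : x = a
    · exact ⟨b, .inl rfl, by simp [mergeMap, hxa]⟩
    · exact ⟨x, .inr (.inr ⟨hxa, hx⟩),
        mergeMap_of_ne (by rintro rfl; exact hb hx) (by rintro rfl; exact hc hx)⟩

theorem mk_mem_image_map_mergeMap_iff {E : Finset (Sym2 ℕ)} {u w : ℕ} (hu : u ≠ a) (hw : w ≠ a)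
    (hub : u ≠ b) (huc : u ≠ c) (hwb : w ≠ b) (hwc : w ≠ c) :
    s(u, w) ∈ E.image (Sym2.map (mergeMap a b c)) ↔ s(u, w) ∈ E := by
  refine ⟨fun h => ?_, fun h => Finset.mem_image.mpr
    ⟨_, h, by rw [Sym2.map_mk, mergeMap_of_ne hub huc, mergeMap_of_ne hwb hwc]⟩⟩
  obtain ⟨e, he, heq⟩ := Finset.mem_image.mp h
  induction e using Sym2.ind with | _ x y => ?_
  rw [Sym2.map_mk] at heq
  have hx : mergeMap a b c x = x := mergeMap_eq_self_of_ne fun h => by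
    rcases Sym2.eq_iff.mp heq with ⟨hx, -⟩ | ⟨hx, -⟩ <;> simp_all
  have hy : mergeMap a b c y = y := mergeMap_eq_self_of_ne fun h => by
    rcases Sym2.eq_iff.mp heq with ⟨-, hy⟩ | ⟨-, hy⟩ <;> simp_all
  rwa [← heq, hx, hy]

theorem mem_or_mem_of_mk_mem_image_map_mergeMap {E : Finset (Sym2 ℕ)} (hE : ∀ e ∈ E, a ∉ e)
    {u : ℕ} (hu : u ≠ a) (h : s(u, a) ∈ E.image (Sym2.map (mergeMap a b c))) :
    s(u, b) ∈ E ∨ s(u, c) ∈ E := by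
  obtain ⟨e, he, heq⟩ := Finset.mem_image.mp h
  induction e using Sym2.ind with | _ x y => ?_
  have key : ∀ x y, s(x, y) ∈ E → mergeMap a b c x = u → mergeMap a b c y = a →
      s(u, b) ∈ E ∨ s(u, c) ∈ E := by
    intro x y hxy hx hy
    rw [← hx, mergeMap_eq_self_of_ne (hx ▸ hu)]
    unfold mergeMap at hy
    split_ifs at hy with hyb
    · rcases hyb with rfl | rfl
      · exact .inl hxy
      · exact .inr hxy
    · exact absurd (hy ▸ Sym2.mem_mk_right x y) (hE _ hxy)
  rw [Sym2.map_mk] at heq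
  rcases Sym2.eq_iff.mp heq with ⟨hx, hy⟩ | ⟨hx, hy⟩
  · exact key x y he hx hy
  · exact key y x (Sym2.eq_swap ▸ he) hy hx

end mergeMap

namespace ICG

structure Admissible (K : ICG) (π : ℕ → ℕ) : Prop where
  blue_nd : ∀ e ∈ K.blue.image (Sym2.map π), ¬ e.IsDiag
  red_nd : ∀ e ∈ K.red.image (Sym2.map π), ¬ e.IsDiag
  disj : Disjoint (K.blue.image (Sym2.map π)) (K.red.image (Sym2.map π))

theorem ext {K L : ICG} (hv : K.verts = L.verts) (hb : K.blue = L.blue) (hr : K.red = L.red) :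
    K = L := by
  cases K
  cases L
  cases hv
  cases hb
  cases hr
  rfl

variable (K : ICG) {π ρ : ℕ → ℕ}

theorem mem_verts_of_mem_image {E : Finset (Sym2 ℕ)} (hE : ∀ e ∈ E, ∀ x ∈ e, x ∈ K.verts)
    {e : Sym2 ℕ} (he : e ∈ E.image (Sym2.map π)) {x : ℕ} (hx : x ∈ e) : x ∈ K.verts.image π := by
  obtain ⟨e', he', rfl⟩ := Finset.mem_image.mp he
  obtain ⟨y, hy, rfl⟩ := Sym2.mem_map.mp hx
  exact Finset.mem_image_of_mem π (hE e' he' y hy)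

def map (h : K.Admissible π) : ICG where
  verts := K.verts.image π
  blue := K.blue.image (Sym2.map π)
  red := K.red.image (Sym2.map π)
  blue_mem _ he _ hx := K.mem_verts_of_mem_image K.blue_mem he hx
  red_mem _ he _ hx := K.mem_verts_of_mem_image K.red_mem he hx
  blue_nd := h.blue_nd
  red_nd := h.red_nd
  disj := h.disj

variable {K}

theorem image_map_image_map (E : Finset (Sym2 ℕ)) :
    (E.image (Sym2.map π)).image (Sym2.map ρ) = E.image (Sym2.map (ρ ∘ π)) := by
  rw [Finset.image_image, Sym2.map_comp]

theorem Admissible.of_comp (h : K.Admissible (ρ ∘ π)) : K.Admissible π := by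
  have himage := image_map_image_map (π := π) (ρ := ρ)
  refine ⟨fun e he hd => ?_, fun e he hd => ?_, ?_⟩
  · exact h.blue_nd _ (himage K.blue ▸ Finset.mem_image_of_mem _ he) (hd.map (f := ρ))
  · exact h.red_nd _ (himage K.red ▸ Finset.mem_image_of_mem _ he) (hd.map (f := ρ))
  · exact Disjoint.of_image_finset (f := Sym2.map ρ) (by rw [himage, himage]; exact h.disj)

theorem Admissible.map (h : K.Admissible π) (h' : K.Admissible (ρ ∘ π)) :
    (K.map h).Admissible ρ := by
  have himage := image_map_image_map (π := π) (ρ := ρ)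
  exact ⟨himage K.blue ▸ h'.blue_nd, himage K.red ▸ h'.red_nd,
    (himage K.blue).symm ▸ (himage K.red).symm ▸ h'.disj⟩

theorem map_map (h : K.Admissible π) (h' : K.Admissible (ρ ∘ π)) :
    (K.map h).map (h.map h') = K.map h' := by
  exact ext (Finset.image_image ..) (image_map_image_map _) (image_map_image_map _)

theorem map_congr (h : K.Admissible π) {π' : ℕ → ℕ} (hπ : π = π') :
    K.map h = K.map (hπ ▸ h) := by
  subst hπ
  rfl

theorem map_eq_self (h : K.Admissible π) (hπ : ∀ x, π x = x) : K.map h = K := by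
  obtain rfl : π = id := funext hπ
  refine ext ?_ ?_ ?_ <;> simp [ICG.map]

theorem permSplit_map_mergeMap {W : Finset ℕ} {a b c : ℕ} (ha : a ∈ W) (hb : b ∉ W) (hc : c ∉ W)
    (hbc : b ≠ c) (hK : K.verts = insert b (insert c (W.erase a)))
    (h : K.Admissible (mergeMap a b c)) : PermSplit (K.map h) K := by
  have hW : (K.map h).verts = W := by
    change K.verts.image _ = W
    rw [hK, image_mergeMap ha hb hc]
  have haK : ∀ e ∈ K.blue ∪ K.red, a ∉ e := fun e he hae => by
    have hmem := hK ▸ (Finset.mem_union.mp he).elim (K.blue_mem e · a hae) (K.red_mem e · a hae)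
    simp only [Finset.mem_insert, Finset.mem_erase] at hmem
    rcases hmem with rfl | rfl | ⟨h, -⟩
    exacts [hb ha, hc ha, h rfl]
  refine ⟨a, b, c, hW ▸ ha, hW ▸ hb, hW ▸ hc, hbc, hW ▸ hK,
    fun u w hu hw hub huc hwb hwc => ⟨mk_mem_image_map_mergeMap_iff hu hw hub huc hwb hwc,
      mk_mem_image_map_mergeMap_iff hu hw hub huc hwb hwc⟩, fun u hu => ?_, fun u hu => ?_⟩
  · refine mem_or_mem_of_mk_mem_image_map_mergeMap (fun e he => haK e (by simp [he])) ?_ hu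
    rintro rfl
    exact (K.map h).blue_nd _ hu (Sym2.mk_isDiag_iff.mpr rfl)
  · refine mem_or_mem_of_mk_mem_image_map_mergeMap (fun e he => haK e (by simp [he])) ?_ hu
    rintro rfl
    exact (K.map h).red_nd _ hu (Sym2.mk_isDiag_iff.mpr rfl)

end ICG

structure IsSplitHistory (V : ℕ → Finset ℕ) (a b c : ℕ → ℕ) (n : ℕ) : Prop where
  mem : ∀ i < n, a i ∈ V i
  left_notMem : ∀ i < n, b i ∉ V i
  right_notMem : ∀ i < n, c i ∉ V i
  left_ne_right : ∀ i < n, b i ≠ c i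
  succ_eq : ∀ i < n, V (i + 1) = insert (b i) (insert (c i) ((V i).erase (a i)))

/-- `ancestor a b c j m w` is the vertex at time `j ≤ m` from which the vertex `w` at time `m`
descends. -/
def ancestor (a b c : ℕ → ℕ) (j : ℕ) : ℕ → ℕ → ℕ
  | 0, w => w
  | m + 1, w => if j ≤ m then ancestor a b c j m (mergeMap (a m) (b m) (c m) w) else w

section ancestor

variable {a b c : ℕ → ℕ} {j k m : ℕ}

theorem ancestor_of_le (h : m ≤ j) (w : ℕ) : ancestor a b c j m w = w := by
  cases m with
  | zero => rfl
  | succ m => simp [ancestor, show ¬ j ≤ m by omega]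

theorem ancestor_succ (h : j ≤ m) (w : ℕ) :
    ancestor a b c j (m + 1) w = ancestor a b c j m (mergeMap (a m) (b m) (c m) w) := by
  simp [ancestor, h]

theorem ancestor_ancestor (hjk : j ≤ k) (hkm : k ≤ m) (w : ℕ) :
    ancestor a b c j k (ancestor a b c k m w) = ancestor a b c j m w := by
  induction m, hkm using Nat.le_induction generalizing w with
  | base => rw [ancestor_of_le le_rfl]
  | succ m hkm ih => rw [ancestor_succ hkm, ancestor_succ (hjk.trans hkm), ih]

theorem ancestor_eq_mergeMap_comp (h : j < m) :
    ancestor a b c j m = mergeMap (a j) (b j) (c j) ∘ ancestor a b c (j + 1) m := by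
  funext w
  rw [Function.comp_apply, ← ancestor_ancestor j.le_succ h, ancestor_succ le_rfl,
    ancestor_of_le le_rfl]

end ancestor

namespace IsSplitHistory

variable {V : ℕ → Finset ℕ} {a b c : ℕ → ℕ} {n : ℕ}

theorem mergeMap_of_mem (h : IsSplitHistory V a b c n) {i x : ℕ} (hi : i < n) (hx : x ∈ V i) :
    mergeMap (a i) (b i) (c i) x = x :=
  mergeMap_of_ne (by rintro rfl; exact h.left_notMem i hi hx)
    (by rintro rfl; exact h.right_notMem i hi hx)

theorem image_ancestor (h : IsSplitHistory V a b c n) {j m : ℕ} (hjm : j ≤ m) (hmn : m ≤ n) :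
    (V m).image (ancestor a b c j m) = V j := by
  induction m, hjm using Nat.le_induction with
  | base => rw [show ancestor a b c j j = id from funext (ancestor_of_le le_rfl), Finset.image_id]
  | succ m hjm ih =>
    have hm : m < n := hmn
    rw [← ih hm.le, ← image_mergeMap (h.mem m hm) (h.left_notMem m hm) (h.right_notMem m hm),
      ← h.succ_eq m hm, Finset.image_image]
    exact Finset.image_congr fun w _ => ancestor_succ hjm w

theorem exists_ancestor_eq (h : IsSplitHistory V a b c n) {j m : ℕ} (hjm : j ≤ m) (hmn : m ≤ n)
    {x : ℕ} (hx : x ∈ V j) : ∃ w ∈ V m, ancestor a b c j m w = x :=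
  Finset.mem_image.mp (h.image_ancestor hjm hmn ▸ hx)

theorem mem_of_unique_descendant (h : IsSplitHistory V a b c n) {r : ℕ} (hr : r ∈ V 0)
    (huniq : ∀ p ∈ V n, ∀ q ∈ V n, ancestor a b c 0 n p = r → ancestor a b c 0 n q = r → p = q) :
    r ∈ V n ∧ ancestor a b c 0 n r = r := by
  suffices ∀ j ≤ n, r ∈ V j ∧ ancestor a b c 0 j r = r from this n le_rfl
  intro j hj
  induction j with
  | zero => exact ⟨hr, rfl⟩
  | succ j ih =>
    obtain ⟨hrj, hroot⟩ := ih (by omega)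
    have hjn : j < n := hj
    have hsucc := h.succ_eq j hjn
    have har : a j ≠ r := by
      rintro rfl
      obtain ⟨p, hp, hpb⟩ := h.exists_ancestor_eq hj le_rfl (x := b j) (by simp [hsucc])
      obtain ⟨q, hq, hqc⟩ := h.exists_ancestor_eq hj le_rfl (x := c j) (by simp [hsucc])
      have hroot' : ∀ x, x = b j ∨ x = c j → ancestor a b c 0 (j + 1) x = a j := fun x hx => by
        rw [ancestor_succ (Nat.zero_le j), mergeMap, if_pos hx, hroot]
      refine h.left_ne_right j hjn (hpb ▸ hqc ▸ congrArg _ (huniq p hp q hq ?_ ?_))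
      · rw [← ancestor_ancestor (Nat.zero_le _) hj, hpb, hroot' _ (.inl rfl)]
      · rw [← ancestor_ancestor (Nat.zero_le _) hj, hqc, hroot' _ (.inr rfl)]
    refine ⟨by simp [hsucc, har.symm, hrj], ?_⟩
    rw [ancestor_succ (Nat.zero_le j), h.mergeMap_of_mem hjn hrj, hroot]

theorem splits (h : IsSplitHistory V a b c n) {K : ICG} (hK : K.verts = V n)
    (hadm : K.Admissible (ancestor a b c 0 n)) : Splits n (K.map hadm) K := by
  have hadm' : ∀ j ≤ n, K.Admissible (ancestor a b c j n) := fun j hj =>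
    ICG.Admissible.of_comp (ρ := ancestor a b c 0 j) <| by
      rwa [show ancestor a b c 0 j ∘ ancestor a b c j n = ancestor a b c 0 n from
        funext (ancestor_ancestor (Nat.zero_le j) hj)]
  refine ⟨fun j => if hj : j ≤ n then K.map (hadm' j hj) else K, by simp, ?_, fun i hi => ?_⟩
  · simp only [le_rfl, dite_true]
    exact K.map_eq_self _ (ancestor_of_le le_rfl)
  · have hcomp := ancestor_eq_mergeMap_comp (a := a) (b := b) (c := c) hi
    simp only [hi.le, Nat.succ_le_of_lt hi, dite_true]
    rw [K.map_congr (hadm' i hi.le) hcomp, ← K.map_map (hadm' (i + 1) hi) (hcomp ▸ hadm' i hi.le)]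
    refine ICG.permSplit_map_mergeMap (h.mem i hi) (h.left_notMem i hi) (h.right_notMem i hi)
      (h.left_ne_right i hi) ?_ _
    change K.verts.image _ = _
    rw [hK, h.image_ancestor hi le_rfl, h.succ_eq i hi]

theorem exists_map_ancestor_eq {G : ℕ → SG} (h : IsSplitHistory (fun i => (G i).verts) a b c n)
    (hpres : ∀ i < n, ∀ u w : ℕ, u ≠ a i → w ≠ a i → u ≠ b i → u ≠ c i → w ≠ b i → w ≠ c i →
      (s(u, w) ∈ (G i).edges ↔ s(u, w) ∈ (G (i + 1)).edges))
    (hsplit : ∀ i < n, ∀ u : ℕ, s(u, a i) ∈ (G i).edges ↔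
      (s(u, b i) ∈ (G (i + 1)).edges ∨ s(u, c i) ∈ (G (i + 1)).edges))
    {e : Sym2 ℕ} (he : e ∈ (G 0).edges) :
    ∃ e' ∈ (G n).edges, e'.map (ancestor a b c 0 n) = e := by
  suffices ∀ j ≤ n, ∃ e' ∈ (G j).edges, e'.map (ancestor a b c 0 j) = e from this n le_rfl
  intro j hj
  induction j with
  | zero => exact ⟨e, he, by simp [ancestor]⟩
  | succ j ih =>
    obtain ⟨e', he', rfl⟩ := ih (by omega)
    have hjn : j < n := hj
    have hroot : ∀ x ∈ (G j).verts, ancestor a b c 0 (j + 1) x = ancestor a b c 0 j x :=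
      fun x hx => by rw [ancestor_succ (Nat.zero_le j), h.mergeMap_of_mem hjn hx]
    have hsplitroot : ∀ x, x = b j ∨ x = c j →
        ancestor a b c 0 (j + 1) x = ancestor a b c 0 j (a j) :=
      fun x hx => by rw [ancestor_succ (Nat.zero_le j), mergeMap, if_pos hx]
    by_cases ha : a j ∈ e'
    · obtain ⟨u, rfl⟩ := Sym2.mem_iff_exists.mp ha
      have hu : u ∈ (G j).verts := (G j).edges_mem _ he' u (Sym2.mem_mk_right _ _)
      rcases (hsplit j hjn u).mp (Sym2.eq_swap ▸ he') with hb | hc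
      · refine ⟨s(u, b j), hb, ?_⟩
        rw [Sym2.map_mk, Sym2.map_mk, hroot u hu, hsplitroot _ (.inl rfl), Sym2.eq_swap]
      · refine ⟨s(u, c j), hc, ?_⟩
        rw [Sym2.map_mk, Sym2.map_mk, hroot u hu, hsplitroot _ (.inr rfl), Sym2.eq_swap]
    · induction e' using Sym2.ind with | _ x y => ?_
      have hx : x ∈ (G j).verts := (G j).edges_mem _ he' x (Sym2.mem_mk_left _ _)
      have hy : y ∈ (G j).verts := (G j).edges_mem _ he' y (Sym2.mem_mk_right _ _)
      have hfresh : ∀ z ∈ (G j).verts, z ≠ b j ∧ z ≠ c j := fun z hz =>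
        ⟨by rintro rfl; exact h.left_notMem j hjn hz, by rintro rfl; exact h.right_notMem j hjn hz⟩
      refine ⟨s(x, y), (hpres j hjn x y (by rintro rfl; simp at ha) (by rintro rfl; simp at ha)
        (hfresh x hx).1 (hfresh x hx).2 (hfresh y hy).1 (hfresh y hy).2).mp he', ?_⟩
      rw [Sym2.map_mk, Sym2.map_mk, hroot x hx, hroot y hy]

end IsSplitHistory

open Classical in
noncomputable def pairsOf (V : Finset ℕ) (P : ℕ → ℕ → Prop) : Finset (Sym2 ℕ) :=
  ((V ×ˢ V).filter fun x => P x.1 x.2).image fun x => s(x.1, x.2)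

section pairsOf

variable {V : Finset ℕ} {P : ℕ → ℕ → Prop}

theorem exists_of_mem_pairsOf {e : Sym2 ℕ} (he : e ∈ pairsOf V P) :
    ∃ x y, e = s(x, y) ∧ x ∈ V ∧ y ∈ V ∧ P x y := by
  obtain ⟨⟨x, y⟩, hxy, rfl⟩ := Finset.mem_image.mp he
  simp only [Finset.mem_filter, Finset.mem_product] at hxy
  exact ⟨x, y, rfl, hxy.1.1, hxy.1.2, hxy.2⟩

theorem mem_of_mem_pairsOf {e : Sym2 ℕ} (he : e ∈ pairsOf V P) {x : ℕ} (hx : x ∈ e) : x ∈ V := by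
  obtain ⟨x, y, rfl, hx', hy', -⟩ := exists_of_mem_pairsOf he
  rcases Sym2.mem_iff.mp hx with rfl | rfl
  exacts [hx', hy']

theorem map_mem_of_mem_pairsOf {ρ : ℕ → ℕ} {B : Finset (Sym2 ℕ)} {e : Sym2 ℕ}
    (he : e ∈ pairsOf V P) (hP : ∀ x y, P x y → s(ρ x, ρ y) ∈ B) : e.map ρ ∈ B := by
  obtain ⟨x, y, rfl, -, -, hxy⟩ := exists_of_mem_pairsOf he
  exact hP x y hxy

theorem mk_mem_pairsOf (hP : ∀ x y, P x y → P y x) {x y : ℕ} :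
    s(x, y) ∈ pairsOf V P ↔ x ∈ V ∧ y ∈ V ∧ P x y := by
  refine ⟨fun h => ?_, fun h => Finset.mem_image.mpr ⟨(x, y), by simpa [and_assoc] using h, rfl⟩⟩
  obtain ⟨x', y', hxy, hx, hy, hP'⟩ := exists_of_mem_pairsOf h
  rcases Sym2.eq_iff.mp hxy with ⟨rfl, rfl⟩ | ⟨rfl, rfl⟩
  exacts [⟨hx, hy, hP'⟩, ⟨hy, hx, hP _ _ hP'⟩]

end pairsOf

theorem Reach.symm {F : SG} {x y : ℕ} (h : Reach F x y) : Reach F y x :=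
  have : Std.Symm fun a b => s(a, b) ∈ F.edges := ⟨fun _ _ h => Sym2.eq_swap ▸ h⟩
  _root_.symm (r := ReflTransGen _) h

namespace SG

variable (F : SG) (ρ : ℕ → ℕ)

def RootConnected (r : ℕ) : Prop :=
  ∀ p ∈ F.verts, ∀ q ∈ F.verts, ρ p = r → ρ q = r → Reach F p q

open Classical in
noncomputable def collapse (p : ℕ) : ℕ :=
  if F.RootConnected ρ (ρ p) then Function.invFunOn ρ F.verts (ρ p) else p

def Linked (x y : ℕ) : Prop :=
  Reach F x y ∧ F.collapse ρ x = x ∧ F.collapse ρ y = y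

variable {F ρ}

theorem collapse_eq_collapse {p q : ℕ} (hc : F.RootConnected ρ (ρ p)) (hpq : ρ p = ρ q) :
    F.collapse ρ p = F.collapse ρ q := by
  unfold collapse
  rw [if_pos hc, if_pos (hpq ▸ hc), hpq]

theorem collapse_spec {p : ℕ} (hp : p ∈ F.verts) :
    F.collapse ρ p ∈ F.verts ∧ ρ (F.collapse ρ p) = ρ p ∧ Reach F p (F.collapse ρ p) ∧
      F.collapse ρ (F.collapse ρ p) = F.collapse ρ p := by
  by_cases hc : F.RootConnected ρ (ρ p)
  · have hcp : F.collapse ρ p = Function.invFunOn ρ F.verts (ρ p) := if_pos hc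
    obtain ⟨hq, hρq⟩ := Function.invFunOn_pos (f := ρ) ⟨p, hp, rfl⟩
    rw [← hcp] at hq hρq
    exact ⟨hq, hρq, hc p hp _ hq rfl hρq, collapse_eq_collapse (hρq ▸ hc) hρq⟩
  · have hcp : F.collapse ρ p = p := if_neg hc
    rw [hcp]
    exact ⟨hp, rfl, .refl, hcp⟩

theorem Linked.symm {x y : ℕ} (h : F.Linked ρ x y) : F.Linked ρ y x :=
  ⟨h.1.symm, h.2.2, h.2.1⟩

theorem Linked.trans {x y z : ℕ} (hxy : F.Linked ρ x y) (hyz : F.Linked ρ y z) :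
    F.Linked ρ x z :=
  ⟨hxy.1.trans hyz.1, hxy.2.1, hyz.2.2⟩

theorem eq_of_forall_linked {r q : ℕ}
    (hlink : ∀ p ∈ F.verts, ρ p = r → F.Linked ρ p q) :
    ∀ p ∈ F.verts, ∀ p' ∈ F.verts, ρ p = r → ρ p' = r → p = p' := by
  intro p hp p' hp' hpr hp'r
  have hc : F.RootConnected ρ (ρ p) := fun a ha a' ha' har ha'r =>
    ((hlink a ha (har.trans hpr)).trans (hlink a' ha' (ha'r.trans hpr)).symm).1
  rw [← (hlink p hp hpr).2.1, ← (hlink p' hp' hp'r).2.1]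
  exact collapse_eq_collapse hc (hpr.trans hp'r.symm)

end SG

section cluster

variable (F : SG) (ρ : ℕ → ℕ) (B R : Finset (Sym2 ℕ))

noncomputable def clusterICG (hB : ∀ e ∈ B, ¬ e.IsDiag) (hR : ∀ e ∈ R, ¬ e.IsDiag)
    (hBR : Disjoint B R) : ICG where
  verts := F.verts
  blue := pairsOf F.verts fun x y => s(ρ x, ρ y) ∈ B ∧ F.Linked ρ x y
  red := pairsOf F.verts fun x y => s(ρ x, ρ y) ∈ R ∧ ¬ F.Linked ρ x y
  blue_mem _ he _ hz := mem_of_mem_pairsOf he hz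
  red_mem _ he _ hz := mem_of_mem_pairsOf he hz
  blue_nd _ he hd := hB _ (map_mem_of_mem_pairsOf he fun _ _ h => h.1) hd.map
  red_nd _ he hd := hR _ (map_mem_of_mem_pairsOf he fun _ _ h => h.1) hd.map
  disj := Finset.disjoint_left.mpr fun _ heB heR => Finset.disjoint_left.mp hBR
    (map_mem_of_mem_pairsOf heB fun _ _ h => h.1) (map_mem_of_mem_pairsOf heR fun _ _ h => h.1)

variable {F ρ B R} {hB : ∀ e ∈ B, ¬ e.IsDiag} {hR : ∀ e ∈ R, ¬ e.IsDiag} {hBR : Disjoint B R}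

theorem mk_mem_clusterICG_blue {x y : ℕ} :
    s(x, y) ∈ (clusterICG F ρ B R hB hR hBR).blue ↔
      x ∈ F.verts ∧ y ∈ F.verts ∧ s(ρ x, ρ y) ∈ B ∧ F.Linked ρ x y :=
  mk_mem_pairsOf fun _ _ h => ⟨Sym2.eq_swap ▸ h.1, h.2.symm⟩

theorem mk_mem_clusterICG_red {x y : ℕ} :
    s(x, y) ∈ (clusterICG F ρ B R hB hR hBR).red ↔
      x ∈ F.verts ∧ y ∈ F.verts ∧ s(ρ x, ρ y) ∈ R ∧ ¬ F.Linked ρ x y :=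
  mk_mem_pairsOf fun _ _ h => ⟨Sym2.eq_swap ▸ h.1, fun h' => h.2 h'.symm⟩

theorem not_hasErrCycle_clusterICG : ¬ HasErrCycle (clusterICG F ρ B R hB hR hBR) := by
  rw [hasErrCycle_iff]
  rintro ⟨x, y, hred, hpath⟩
  obtain ⟨-, -, hxy, hlinked⟩ := mk_mem_clusterICG_red.mp hred
  have hne : x ≠ y := by
    rintro rfl
    exact hR _ hxy (Sym2.mk_isDiag_iff.mpr rfl)
  have hlink : TransGen (F.Linked ρ) x y :=
    TransGen.mono (fun a b hab => (mk_mem_clusterICG_blue.mp hab).2.2.2) _ _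
      ((reflTransGen_iff_eq_or_transGen.mp hpath).resolve_left hne.symm)
  have : IsTrans ℕ (F.Linked ρ) := ⟨fun _ _ _ => SG.Linked.trans⟩
  rw [transGen_eq_self] at hlink
  exact hlinked hlink

theorem image_clusterICG_blue (hdesc : ∀ e ∈ B, ∃ e' ∈ F.edges, e'.map ρ = e) :
    (clusterICG F ρ B R hB hR hBR).blue.image (Sym2.map ρ) = B := by
  ext e
  refine ⟨fun he => ?_, fun he => ?_⟩
  · obtain ⟨e', he', rfl⟩ := Finset.mem_image.mp he
    induction e' using Sym2.ind with | _ x y => ?_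
    exact (mk_mem_clusterICG_blue.mp he').2.2.1
  · obtain ⟨e', he', rfl⟩ := hdesc e he
    induction e' using Sym2.ind with | _ p q => ?_
    have hp := F.edges_mem _ he' p (Sym2.mem_mk_left p q)
    have hq := F.edges_mem _ he' q (Sym2.mem_mk_right p q)
    obtain ⟨hp₁, hp₂, hp₃, hp₄⟩ := SG.collapse_spec (ρ := ρ) hp
    obtain ⟨hq₁, hq₂, hq₃, hq₄⟩ := SG.collapse_spec (ρ := ρ) hq
    refine Finset.mem_image.mpr ⟨s(F.collapse ρ p, F.collapse ρ q), ?_, by simp [hp₂, hq₂]⟩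
    refine mk_mem_clusterICG_blue.mpr ⟨hp₁, hq₁, by simpa [hp₂, hq₂] using he, ?_, hp₄, hq₄⟩
    exact hp₃.symm.trans (ReflTransGen.head he' hq₃)

theorem image_clusterICG_red {V₀ : Finset ℕ} (hRV : ∀ e ∈ R, ∀ x ∈ e, x ∈ V₀)
    (hsurj : ∀ r ∈ V₀, ∃ p ∈ F.verts, ρ p = r)
    (hunsplit : ∀ r ∈ V₀, (∀ p ∈ F.verts, ∀ q ∈ F.verts, ρ p = r → ρ q = r → p = q) →
      r ∈ F.verts ∧ ρ r = r)
    (hsep : ∀ x y, s(x, y) ∈ R → x ∈ F.verts → y ∈ F.verts → ¬ Reach F x y) :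
    (clusterICG F ρ B R hB hR hBR).red.image (Sym2.map ρ) = R := by
  ext e
  refine ⟨fun he => ?_, fun he => ?_⟩
  · obtain ⟨e', he', rfl⟩ := Finset.mem_image.mp he
    induction e' using Sym2.ind with | _ x y => ?_
    exact (mk_mem_clusterICG_red.mp he').2.2.1
  · induction e using Sym2.ind with | _ x y => ?_
    have hx := hRV _ he x (Sym2.mem_mk_left x y)
    have hy := hRV _ he y (Sym2.mem_mk_right x y)
    by_contra hnot
    have hall : ∀ p ∈ F.verts, ∀ q ∈ F.verts, ρ p = x → ρ q = y → F.Linked ρ p q := by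
      intro p hp q hq hpx hqy
      by_contra hl
      refine hnot (Finset.mem_image.mpr ⟨s(p, q), ?_, by simp [hpx, hqy]⟩)
      exact mk_mem_clusterICG_red.mpr ⟨hp, hq, by rwa [hpx, hqy], hl⟩
    obtain ⟨p₀, hp₀, hp₀x⟩ := hsurj x hx
    obtain ⟨q₀, hq₀, hq₀y⟩ := hsurj y hy
    obtain ⟨hxF, hρx⟩ := hunsplit x hx <| SG.eq_of_forall_linked fun p hp hpx =>
      hall p hp q₀ hq₀ hpx hq₀y
    obtain ⟨hyF, hρy⟩ := hunsplit y hy <| SG.eq_of_forall_linked fun q hq hqy =>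
      (hall p₀ hp₀ q hq hp₀x hqy).symm
    exact hsep x y he hxF hyF (hall x hxF y hyF hρx hρy).1

end cluster

theorem exists_splitHistory_of_exclStep {f : ℕ → SG × Finset ℕ} {n : ℕ}
    (h : ∀ i < n, ExclStep (f i) (f (i + 1))) :
    ∃ a b c : ℕ → ℕ, IsSplitHistory (fun i => (f i).1.verts) a b c n ∧
      (∀ i < n, ∀ u w : ℕ, u ≠ a i → w ≠ a i → u ≠ b i → u ≠ c i → w ≠ b i → w ≠ c i →
        (s(u, w) ∈ (f i).1.edges ↔ s(u, w) ∈ (f (i + 1)).1.edges)) ∧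
      (∀ i < n, ∀ u : ℕ, s(u, a i) ∈ (f i).1.edges ↔
        (s(u, b i) ∈ (f (i + 1)).1.edges ∨ s(u, c i) ∈ (f (i + 1)).1.edges)) := by
  choose! a b c ha _ _ hb hc hbc _ hverts hpres hsplit _ using h
  exact ⟨a, b, c, ⟨ha, hb, hc, hbc, hverts⟩, hpres, hsplit⟩

theorem splits_of_mcSolution (G : SG) (S : Finset (Sym2 ℕ)) (k : ℕ) (hS : Disjoint S G.edges)
    (H : ICG) (hv : H.verts = G.verts) (hb : H.blue = G.edges) (hr : H.red = S)
    (h : MCSolution G S k) : ∃ n ≤ k, ∃ G', Splits n H G' ∧ ¬ HasErrCycle G' := by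
  obtain ⟨n, f, hnk, hf₀, hf, hsep⟩ := h
  obtain ⟨a, b, c, hhist, hpres, hsplit⟩ := exists_splitHistory_of_exclStep hf
  have hV₀ : (f 0).1.verts = G.verts := by rw [hf₀]
  have hE₀ : (f 0).1.edges = G.edges := by rw [hf₀]
  have hSnd : ∀ e ∈ S, ¬ e.IsDiag := hr ▸ H.red_nd
  let K := clusterICG (f n).1 (ancestor a b c 0 n) G.edges S G.edges_nd hSnd hS.symm
  have hblue : K.blue.image (Sym2.map (ancestor a b c 0 n)) = G.edges :=
    image_clusterICG_blue fun e he =>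
      hhist.exists_map_ancestor_eq (G := fun i => (f i).1) hpres hsplit (hE₀ ▸ he)
  have hred : K.red.image (Sym2.map (ancestor a b c 0 n)) = S :=
    image_clusterICG_red (V₀ := G.verts) (fun e he x hx => hv ▸ H.red_mem e (hr ▸ he) x hx)
      (fun r hr => hhist.exists_ancestor_eq (Nat.zero_le n) le_rfl (hV₀ ▸ hr))
      (fun r hr huniq => hhist.mem_of_unique_descendant (hV₀ ▸ hr) huniq)
      (fun x y hxy hx hy => hsep _ hxy x y rfl hx hy)
  have hadm : K.Admissible (ancestor a b c 0 n) :=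
    ⟨hblue ▸ G.edges_nd, hred ▸ hSnd, hblue ▸ hred ▸ hS.symm⟩
  have hH : K.map hadm = H := by
    refine ICG.ext ?_ (hblue.trans hb.symm) (hred.trans hr.symm)
    change (f n).1.verts.image _ = _
    rw [hhist.image_ancestor (Nat.zero_le n) le_rfl, hV₀, hv]
  exact ⟨n, hnk, K, hH ▸ hhist.splits rfl hadm, not_hasErrCycle_clusterICG⟩

theorem stmt3 (G : SG) (S : Finset (Sym2 ℕ)) (k : ℕ)
    (hS : Disjoint S G.edges)
    (H : ICG) (hv : H.verts = G.verts) (hb : H.blue = G.edges) (hr : H.red = S) :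
    MCSolution G S k ↔ (∃ n ≤ k, ∃ G', Splits n H G' ∧ ¬ HasErrCycle G') :=
  ⟨splits_of_mcSolution G S k hS H hv hb hr, mcSolution_of_splits G S k H hv hb hr⟩
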